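/- arXiv:2203.09682 — 2 statements merged into one kernel-verified Lean document; each statement's English description precedes it below -/
import Mathlib

section
/- Under SUTVA with fixed n_t, among all randomized saturation designs: if M S(W^+) ≥ ∑_j N_j S(W^{(j)}), the variance of the difference-in-means estimator is minimized by the constant vector π = (n_t/N,…,n_t/N) (stratified design); if M S(W^+) ≤ ∑_j N_j S(W^{(j)}), it is minimized by any π ∈ {0,1}^M with mean n_t/N (cluster-based design). -/
/-! The variance is affine in `∑ j (π j - n_t/N)²` with a slope of the sign of
`M S(W⁺) - ∑ j N_j S(W^{(j)})`. The constant vector makes that sum zero, and for `π ∈ [0,1]^M`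
with a fixed total, `π j² ≤ π j` (with equality exactly on `{0,1}`) shows that the sum is largest
at the `{0,1}`-valued vectors. -/

open Finset

theorem Finset.sum_eq_of_sum_div_card_eq {ι : Type*} [Fintype ι] {f g : ι → ℝ}
    (h : (∑ i, f i) / Fintype.card ι = (∑ i, g i) / Fintype.card ι) :
    ∑ i, f i = ∑ i, g i := by
  rcases isEmpty_or_nonempty ι with _ | _
  · simp only [univ_eq_empty, sum_empty]
  · exact (div_left_inj' (Nat.cast_ne_zero.2 Fintype.card_ne_zero)).1 h

theorem sum_sq_sub_le_of_sum_eq_of_boolean {ι : Type*} [Fintype ι] {π π' : ι → ℝ} (c : ℝ)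
    (hπ : ∀ j, π j ∈ Set.Icc (0 : ℝ) 1) (hπ' : ∀ j, π' j = 0 ∨ π' j = 1)
    (hsum : ∑ j, π j = ∑ j, π' j) :
    ∑ j, (π j - c) ^ 2 ≤ ∑ j, (π' j - c) ^ 2 := by
  calc ∑ j, (π j - c) ^ 2 ≤ ∑ j, ((1 - 2 * c) * π j + c ^ 2) :=
        sum_le_sum fun j _ => by nlinarith [(hπ j).1, (hπ j).2]
    _ = ∑ j, ((1 - 2 * c) * π' j + c ^ 2) := by simp only [sum_add_distrib, ← mul_sum, hsum]
    _ = ∑ j, (π' j - c) ^ 2 :=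
        sum_congr rfl fun j _ => by rcases hπ' j with h | h <;> rw [h] <;> ring

theorem stmt9_general (M K nt : ℕ)
    (Y1 Y0 : Fin M → Fin K → ℝ) :
    let N : ℕ := M * K
    let nc : ℕ := N - nt
    let W : Fin M → Fin K → ℝ := fun j i => ((nt : ℝ) / N) * Y0 j i + ((nc : ℝ) / N) * Y1 j i
    let SW : Fin M → ℝ := fun j => (∑ i, (W j i - (∑ i', W j i') / K) ^ 2) / ((K : ℝ) - 1)
    let Wp : Fin M → ℝ := fun j => ∑ i, W j i
    let SWp : ℝ := (∑ j, (Wp j - (∑ j', Wp j') / M) ^ 2) / ((M : ℝ) - 1)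
    let V : (Fin M → ℝ) → ℝ := fun π =>
      (1 / ((nt : ℝ) * nc)) * ∑ j, (K : ℝ) * SW j
      + ((N : ℝ) ^ 2 / ((nt : ℝ) ^ 2 * (nc : ℝ) ^ 2))
          * ((M : ℝ) * SWp - ∑ j, (K : ℝ) * SW j)
          * ((∑ j, (π j - (nt : ℝ) / N) ^ 2) / M)
    let admissible : (Fin M → ℝ) → Prop := fun π =>
      (∀ j, π j ∈ Set.Icc (0 : ℝ) 1) ∧ (∑ j, π j) / M = (nt : ℝ) / N
    ((∑ j, (K : ℝ) * SW j ≤ (M : ℝ) * SWp →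
      ∀ π, admissible π → V (fun _ => (nt : ℝ) / N) ≤ V π) ∧
    ((M : ℝ) * SWp ≤ ∑ j, (K : ℝ) * SW j →
      ∀ π, admissible π → ∀ π01, admissible π01 → (∀ j, π01 j = 0 ∨ π01 j = 1) →
        V π01 ≤ V π)) := by
  intro N nc W SW Wp SWp V admissible
  have hC : 0 ≤ (N : ℝ) ^ 2 / ((nt : ℝ) ^ 2 * (nc : ℝ) ^ 2) := by positivity
  constructor
  · intro hB π _
    have hD : 0 ≤ (∑ j, (π j - (nt : ℝ) / N) ^ 2) / M := by positivity
    simp only [V, sub_self, zero_pow two_ne_zero, sum_const_zero, zero_div, mul_zero, add_zero]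
    exact le_add_of_nonneg_right (mul_nonneg (mul_nonneg hC (sub_nonneg.2 hB)) hD)
  · intro hB π hπ π01 hπ01 h01
    have hsum : ∑ j, π j = ∑ j, π01 j := Finset.sum_eq_of_sum_div_card_eq <| by
      simp only [Fintype.card_fin, hπ.2, hπ01.2]
    have hD : (∑ j, (π j - (nt : ℝ) / N) ^ 2) / M ≤ (∑ j, (π01 j - (nt : ℝ) / N) ^ 2) / M :=
      div_le_div_of_nonneg_right (sum_sq_sub_le_of_sum_eq_of_boolean _ hπ.1 h01 hsum) M.cast_nonneg
    exact add_le_add_right (mul_le_mul_of_nonpos_left hD (mul_nonpos_of_nonneg_of_nonpos hC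
      (sub_nonpos.2 hB))) _

/-- Under SUTVA with fixed n_t, the variance of the
difference-in-means estimator under a randomized saturation design equals
A + B·Var[π] with A = (1/(n_t n_c))∑_j N_j S(W^{(j)}) and
B = (N²/(n_t²n_c²))[M S(W⁺) − ∑_j N_j S(W^{(j)})]. If M S(W⁺) ≥ ∑_j N_j S(W^{(j)})
it is minimized over admissible π (coordinates in [0,1], mean n_t/N) by the
constant vector n_t/N (stratified design); if M S(W⁺) ≤ ∑_j N_j S(W^{(j)}) it is
minimized by any {0,1}-valued π with mean n_t/N (cluster-based design). -/
theorem stmt9 (M K nt : ℕ) (hM : 2 ≤ M) (hK : 2 ≤ K)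
    (Y1 Y0 : Fin M → Fin K → ℝ)
    (hnt : 0 < nt) (hnc : nt < M * K) :
    let N : ℕ := M * K
    let nc : ℕ := N - nt
    let W : Fin M → Fin K → ℝ := fun j i => ((nt : ℝ) / N) * Y0 j i + ((nc : ℝ) / N) * Y1 j i
    let SW : Fin M → ℝ := fun j => (∑ i, (W j i - (∑ i', W j i') / K) ^ 2) / ((K : ℝ) - 1)
    let Wp : Fin M → ℝ := fun j => ∑ i, W j i
    let SWp : ℝ := (∑ j, (Wp j - (∑ j', Wp j') / M) ^ 2) / ((M : ℝ) - 1)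
    let V : (Fin M → ℝ) → ℝ := fun π =>
      (1 / ((nt : ℝ) * nc)) * ∑ j, (K : ℝ) * SW j
      + ((N : ℝ) ^ 2 / ((nt : ℝ) ^ 2 * (nc : ℝ) ^ 2))
          * ((M : ℝ) * SWp - ∑ j, (K : ℝ) * SW j)
          * ((∑ j, (π j - (nt : ℝ) / N) ^ 2) / M)
    let admissible : (Fin M → ℝ) → Prop := fun π =>
      (∀ j, π j ∈ Set.Icc (0 : ℝ) 1) ∧ (∑ j, π j) / M = (nt : ℝ) / N
    ((∑ j, (K : ℝ) * SW j ≤ (M : ℝ) * SWp →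
      ∀ π, admissible π → V (fun _ => (nt : ℝ) / N) ≤ V π) ∧
    ((M : ℝ) * SWp ≤ ∑ j, (K : ℝ) * SW j →
      ∀ π, admissible π → ∀ π01, admissible π01 → (∀ j, π01 j = 0 ∨ π01 j = 1) →
        V π01 ≤ V π)) :=
  stmt9_general M K nt Y1 Y0
end

section
/- Let π ∈ [0,1]^M be a vector symmetric about its mean μ = n_t/N ≤ 1/2 with each coordinate in [0, 2μ]. Then the kurtosis gap satisfies 0 ≤ μ_{4c}[π] − Var²[π] ≤ μ² Var[π] − Var²[π], where μ_{kc}[π] is the k-th empirical central moment; the lower bound is attained when all (π_j − μ)² are equal and the upper bound when every π_j ∈ {0, μ, 2μ}. -/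
/-! The lower bound is the Cauchy–Schwarz (Jensen) inequality `(𝔼 X)² ≤ 𝔼 X²` for
`X = (π_j - μ)²`. The upper bound is pointwise: every `π_j ∈ [0, 2μ]` satisfies
`|π_j - μ| ≤ μ`, hence `(π_j - μ)⁴ ≤ μ² (π_j - μ)²`, with equality exactly when
`π_j - μ ∈ {0, ±μ}`. -/

open Finset

theorem Finset.sum_div_card_sq_eq_sum_sq_div_card_of_forall_eq {ι : Type*} {s : Finset ι}
    {f : ι → ℝ} (h : ∀ i ∈ s, ∀ j ∈ s, f i = f j) :
    ((∑ i ∈ s, f i) / #s) ^ 2 = (∑ i ∈ s, f i ^ 2) / #s := by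
  obtain rfl | ⟨i₀, hi₀⟩ := s.eq_empty_or_nonempty
  · simp
  have hs : (#s : ℝ) ≠ 0 := by exact_mod_cast (card_pos.mpr ⟨i₀, hi₀⟩).ne'
  rw [sum_congr rfl fun i hi => h i hi i₀ hi₀,
    sum_congr rfl fun i hi => congrArg (· ^ 2) (h i hi i₀ hi₀), sum_const, sum_const,
    nsmul_eq_mul, nsmul_eq_mul]
  field_simp

theorem pow_four_le_sq_mul_sq_of_abs_le {x a : ℝ} (h : |x| ≤ a) : x ^ 4 ≤ a ^ 2 * x ^ 2 := by
  have hsq : x ^ 2 ≤ a ^ 2 := sq_le_sq' (neg_le_of_abs_le h) (le_of_abs_le h)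
  calc x ^ 4 = x ^ 2 * x ^ 2 := by ring
    _ ≤ a ^ 2 * x ^ 2 := mul_le_mul_of_nonneg_right hsq (sq_nonneg x)

theorem abs_sub_le_of_mem_Icc_zero_two_mul {x μ : ℝ} (hx : x ∈ Set.Icc 0 (2 * μ)) :
    |x - μ| ≤ μ :=
  abs_sub_le_iff.mpr ⟨by linarith [hx.2], by linarith [hx.1]⟩

theorem sub_pow_four_eq_sq_mul_sub_sq {x μ : ℝ} (hx : x = 0 ∨ x = μ ∨ x = 2 * μ) :
    (x - μ) ^ 4 = μ ^ 2 * (x - μ) ^ 2 := by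
  rcases hx with rfl | rfl | rfl <;> ring

theorem stmt13_general (M : ℕ) (μ : ℝ)
    (π : Fin M → ℝ) (hbound : ∀ j, π j ∈ Set.Icc 0 (2 * μ)) :
    let Varπ : ℝ := (∑ j, (π j - μ) ^ 2) / M
    let μ4c : ℝ := (∑ j, (π j - μ) ^ 4) / M
    (0 ≤ μ4c - Varπ ^ 2) ∧
    (μ4c - Varπ ^ 2 ≤ μ ^ 2 * Varπ - Varπ ^ 2) ∧
    ((∀ j j' : Fin M, (π j - μ) ^ 2 = (π j' - μ) ^ 2) → μ4c - Varπ ^ 2 = 0) ∧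
    ((∀ j, π j = 0 ∨ π j = μ ∨ π j = 2 * μ) → μ4c - Varπ ^ 2 = μ ^ 2 * Varπ - Varπ ^ 2) := by
  intro Varπ μ4c
  have hcard : (#(univ : Finset (Fin M)) : ℝ) = M := by simp
  have hμ4c : μ4c = (∑ j, ((π j - μ) ^ 2) ^ 2) / #(univ : Finset (Fin M)) := by
    simp only [μ4c, hcard, ← pow_mul]
  have hVar : Varπ = (∑ j, (π j - μ) ^ 2) / #(univ : Finset (Fin M)) := by
    rw [hcard]
  have hmul : μ ^ 2 * Varπ = (∑ j, μ ^ 2 * (π j - μ) ^ 2) / M := by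
    rw [← mul_sum, mul_div_assoc]
  refine ⟨?_, ?_, fun hconst => ?_, fun hvals => ?_⟩
  · rw [sub_nonneg, hμ4c, hVar]
    exact sum_div_card_sq_le_sum_sq_div_card
  · rw [sub_le_sub_iff_right, hmul]
    unfold μ4c
    gcongr with j
    exact pow_four_le_sq_mul_sq_of_abs_le (abs_sub_le_of_mem_Icc_zero_two_mul (hbound j))
  · rw [sub_eq_zero, hμ4c, hVar]
    exact (sum_div_card_sq_eq_sum_sq_div_card_of_forall_eq fun i _ j _ => hconst i j).symm
  · rw [hmul]
    simp only [μ4c, sub_pow_four_eq_sq_mul_sub_sq (hvals _)]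

/-- For π ∈ [0,2μ]^M symmetric about its mean μ ≤ 1/2, the kurtosis
gap satisfies 0 ≤ μ₄c[π] − Var²[π] ≤ μ²·Var[π] − Var²[π]; the lower bound is
attained when all (π_j−μ)² are equal, and the upper when every π_j ∈ {0, μ, 2μ}. -/
theorem stmt13 (M : ℕ) (hM : 1 ≤ M) (μ : ℝ) (hμ0 : 0 ≤ μ) (hμ : μ ≤ 1 / 2)
    (π : Fin M → ℝ) (hbound : ∀ j, π j ∈ Set.Icc 0 (2 * μ))
    (hmean : (∑ j, π j) / M = μ)
    (hsym : ∀ j : Fin M, π j + π j.rev = 2 * μ) :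
    let Varπ : ℝ := (∑ j, (π j - μ) ^ 2) / M
    let μ4c : ℝ := (∑ j, (π j - μ) ^ 4) / M
    (0 ≤ μ4c - Varπ ^ 2) ∧
    (μ4c - Varπ ^ 2 ≤ μ ^ 2 * Varπ - Varπ ^ 2) ∧
    ((∀ j j' : Fin M, (π j - μ) ^ 2 = (π j' - μ) ^ 2) → μ4c - Varπ ^ 2 = 0) ∧
    ((∀ j, π j = 0 ∨ π j = μ ∨ π j = 2 * μ) → μ4c - Varπ ^ 2 = μ ^ 2 * Varπ - Varπ ^ 2) :=
  stmt13_general M μ π hbound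
end
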